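/- arXiv:2311.12963 — 8 statements merged into one kernel-verified Lean document; each statement's English description precedes it below -/
import Mathlib

section
/- Let G be a nontrivial finite group. If G is homogeneous of rank n, then r(G) = n, i.e., n is the least length of a generating sequence of G. -/
/-- `(x₁,…,xₙ)` is a generating sequence of `G`: the entries generate `G`. -/
def IsGenSeq {G : Type*} [Group G] {n : ℕ} (x : Fin n → G) : Prop :=
  Subgroup.closure (Set.range x) = ⊤

/-- `r(G)`: the least `n` such that `G` has a generating sequence of length `n`. -/
noncomputable def grank (G : Type*) [Group G] : ℕ :=
  sInf {n : ℕ | ∃ x : Fin n → G, IsGenSeq x}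

/-- `G` is homogeneous of rank `n`: `Γ_n(G)` is nonempty and `Aut(G)` acts
transitively on it. -/
def IsHomogeneous (G : Type*) [Group G] (n : ℕ) : Prop :=
  (∃ x : Fin n → G, IsGenSeq x) ∧
    ∀ x y : Fin n → G, IsGenSeq x → IsGenSeq y → ∃ f : G ≃* G, ∀ i, f (x i) = y i

section

variable {G : Type*} [Group G]

theorem IsGenSeq.append {m k : ℕ} {x : Fin m → G} (hx : IsGenSeq x) (y : Fin k → G) :
    IsGenSeq (Fin.append x y) := by
  have hrange : Set.range x ⊆ Set.range (Fin.append x y) := by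
    rintro _ ⟨i, rfl⟩
    exact ⟨Fin.castAdd k i, Fin.append_left x y i⟩
  exact top_le_iff.mp (hx ▸ Subgroup.closure_mono hrange)

theorem grank_le {n : ℕ} {x : Fin n → G} (hx : IsGenSeq x) : grank G ≤ n :=
  Nat.sInf_le ⟨x, hx⟩

theorem exists_isGenSeq_grank {n : ℕ} {x : Fin n → G} (hx : IsGenSeq x) :
    ∃ y : Fin (grank G) → G, IsGenSeq y :=
  Nat.sInf_mem (s := {n | ∃ x : Fin n → G, IsGenSeq x}) ⟨n, x, hx⟩

theorem IsHomogeneous.eq_one_iff {n : ℕ} (h : IsHomogeneous G n) {x y : Fin n → G}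
    (hx : IsGenSeq x) (hy : IsGenSeq y) (i : Fin n) : x i = 1 ↔ y i = 1 := by
  obtain ⟨f, hf⟩ := h.2 x y hx hy
  rw [← hf i, f.map_eq_one_iff]

/-- Pad a shorter generating sequence once with `1` and once with some `g ≠ 1`: the two
results generate `G`, but no automorphism can carry one to the other. -/
theorem not_isHomogeneous_of_lt [Nontrivial G] {m n : ℕ} {x : Fin m → G} (hx : IsGenSeq x)
    (hmn : m < n) : ¬ IsHomogeneous G n := by
  obtain ⟨k, rfl⟩ : ∃ k, n = m + (k + 1) := ⟨n - m - 1, by omega⟩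
  intro h
  obtain ⟨g, hg⟩ := exists_ne (1 : G)
  have hpad := h.eq_one_iff (hx.append fun _ : Fin (k + 1) => 1) (hx.append fun _ => g)
    (Fin.natAdd m 0)
  simp only [Fin.append_right, true_iff] at hpad
  exact hg hpad

end

theorem grank_eq_of_isHomogeneous_general (G : Type*) [Group G] [Nontrivial G] (n : ℕ)
    (h : IsHomogeneous G n) : grank G = n := by
  obtain ⟨x, hx⟩ := h.1
  obtain ⟨y, hy⟩ := exists_isGenSeq_grank hx
  exact (grank_le hx).antisymm (not_lt.mp fun hlt => not_isHomogeneous_of_lt hy hlt h)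

/-- A nontrivial finite homogeneous group of rank `n` satisfies `r(G) = n`. -/
theorem grank_eq_of_isHomogeneous (G : Type*) [Group G] [Finite G] [Nontrivial G] (n : ℕ)
    (h : IsHomogeneous G n) : grank G = n :=
  grank_eq_of_isHomogeneous_general G n h
end

section
/- If a finite group G is homogeneous of rank n, then G is isomorphic to its homogeneous cover H(n,G). -/
/-- The intersection of the kernels of all surjective homomorphisms `F_n → G`. -/
def coverKer (n : ℕ) (G : Type*) [Group G] : Subgroup (FreeGroup (Fin n)) :=
  ⨅ f ∈ {f : FreeGroup (Fin n) →* G | Function.Surjective f}, MonoidHom.ker f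

instance coverKer_normal (n : ℕ) (G : Type*) [Group G] : (coverKer n G).Normal := by
  constructor
  intro x hx g
  simp only [coverKer, Subgroup.mem_iInf] at hx ⊢
  intro f hf
  exact (MonoidHom.normal_ker f).conj_mem x (hx f hf) g

/-- The homogeneous cover `H(n,G) = F_n / K`, where `K` is the intersection of the
kernels of all surjective homomorphisms `F_n → G`. -/
abbrev HomogeneousCover (n : ℕ) (G : Type*) [Group G] :=
  FreeGroup (Fin n) ⧸ coverKer n G

/-!
Generating sequences of length `n` are the same as surjections `F_n → G`, and an automorphism
carrying one sequence to another composes with the first surjection to give the second. So if `Aut(G)` is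
transitive on `Γ_n(G)`, all surjections `F_n → G` have the same kernel, which is then `K`, and
`H(n,G) = F_n / K ≅ G`.
-/

section

variable {G : Type*} [Group G] {n : ℕ}

theorem isGenSeq_iff_surjective_lift (x : Fin n → G) :
    IsGenSeq x ↔ Function.Surjective (FreeGroup.lift x) := by
  rw [← MonoidHom.range_eq_top, FreeGroup.range_lift_eq_closure]
  rfl

theorem isGenSeq_comp_of_of_surjective {f : FreeGroup (Fin n) →* G}
    (hf : Function.Surjective f) : IsGenSeq (f ∘ FreeGroup.of) := by
  rw [isGenSeq_iff_surjective_lift]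
  exact (FreeGroup.lift.apply_symm_apply f).symm ▸ hf

theorem coverKer_le_ker {f : FreeGroup (Fin n) →* G} (hf : Function.Surjective f) :
    coverKer n G ≤ f.ker :=
  biInf_le _ hf

theorem IsHomogeneous.ker_le_ker (h : IsHomogeneous G n) {π f : FreeGroup (Fin n) →* G}
    (hπ : Function.Surjective π) (hf : Function.Surjective f) : π.ker ≤ f.ker := by
  obtain ⟨φ, hφ⟩ := h.2 _ _ (isGenSeq_comp_of_of_surjective hπ)
    (isGenSeq_comp_of_of_surjective hf)
  have hfactor : φ.toMonoidHom.comp π = f := FreeGroup.ext_hom _ _ hφ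
  intro w hw
  rw [MonoidHom.mem_ker, ← hfactor, MonoidHom.comp_apply, hw, map_one]

theorem IsHomogeneous.coverKer_eq_ker (h : IsHomogeneous G n) {π : FreeGroup (Fin n) →* G}
    (hπ : Function.Surjective π) : coverKer n G = π.ker :=
  le_antisymm (coverKer_le_ker hπ) (le_iInf₂ fun _ hf => h.ker_le_ker hπ hf)

end

theorem iso_cover_of_isHomogeneous_general (G : Type*) [Group G] (n : ℕ)
    (h : IsHomogeneous G n) : Nonempty (G ≃* HomogeneousCover n G) := by
  obtain ⟨x, hx⟩ := h.1
  have hπ := (isGenSeq_iff_surjective_lift x).1 hx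
  exact ⟨(QuotientGroup.quotientKerEquivOfSurjective _ hπ).symm.trans
    (QuotientGroup.quotientMulEquivOfEq (h.coverKer_eq_ker hπ).symm)⟩

/-- If `G` is homogeneous of rank `n`, then `G ≅ H(n,G)`. -/
theorem iso_cover_of_isHomogeneous (G : Type*) [Group G] [Finite G] (n : ℕ)
    (h : IsHomogeneous G n) : Nonempty (G ≃* HomogeneousCover n G) :=
  iso_cover_of_isHomogeneous_general G n h
end

section
/- Let G be a finite group that can be generated by n elements, and let H₁,…,H_m be normal subgroups of G. Then any subdirect product H ≤ G/H₁ × ⋯ × G/H_m of the quotients G/Hᵢ that can be generated by n elements is a quotient of H(n,G), i.e., there is a surjective homomorphism H(n,G) → H. -/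
open Subgroup

section aux

lemma natCard_sigma {ι : Type*} [Fintype ι] (f : ι → Type*) [∀ i, Finite (f i)] :
    Nat.card (Σ i, f i) = ∑ i, Nat.card (f i) := by
  classical
  haveI := fun i => Fintype.ofFinite (f i)
  simp [Nat.card_eq_fintype_card, Fintype.card_sigma]

variable {G : Type*} [Group G] [Finite G] {n : ℕ}

/-- tuples in `U` lifting `y`. -/
def lifts (N U : Subgroup G) [N.Normal] (y : Fin n → G ⧸ N) : Set (Fin n → G) :=
  {x | (∀ i, x i ∈ U) ∧ ∀ i, QuotientGroup.mk' N (x i) = y i}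

/-- tuples generating exactly `U` lifting `y`. -/
def gens (N U : Subgroup G) [N.Normal] (y : Fin n → G ⧸ N) : Set (Fin n → G) :=
  {x | Subgroup.closure (Set.range x) = U ∧ ∀ i, QuotientGroup.mk' N (x i) = y i}

lemma card_fiber (N U : Subgroup G) [N.Normal] (q : G ⧸ N)
    (hU : U.map (QuotientGroup.mk' N) = ⊤) :
    Nat.card {u : G // u ∈ U ∧ QuotientGroup.mk' N u = q} = Nat.card ↥(U ⊓ N) := by
  have : q ∈ U.map (QuotientGroup.mk' N) := hU ▸ Subgroup.mem_top q
  obtain ⟨u₀, hu₀U, hu₀⟩ := this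
  refine Nat.card_congr ?_
  refine ⟨fun u => ⟨u₀⁻¹ * u.1, Subgroup.mem_inf.2 ⟨U.mul_mem (U.inv_mem hu₀U) u.2.1, ?_⟩⟩,
    fun v => ⟨u₀ * v.1, U.mul_mem hu₀U (Subgroup.mem_inf.1 v.2).1, ?_⟩, ?_, ?_⟩
  · have h1 : QuotientGroup.mk' N (u₀⁻¹ * u.1) = 1 := by
      rw [map_mul, map_inv, hu₀, u.2.2, inv_mul_cancel]
    exact (QuotientGroup.eq_one_iff _).1 h1
  · have hv : v.1 ∈ N := (Subgroup.mem_inf.1 v.2).2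
    rw [map_mul, hu₀, show QuotientGroup.mk' N v.1 = 1 from (QuotientGroup.eq_one_iff _).2 hv,
      mul_one]
  · intro u; ext; simp
  · intro v; ext; simp

lemma card_lifts (N U : Subgroup G) [N.Normal] (y : Fin n → G ⧸ N)
    (hU : U.map (QuotientGroup.mk' N) = ⊤) :
    Nat.card (lifts N U y) = Nat.card ↥(U ⊓ N) ^ n := by
  have e : lifts N U y ≃ ∀ i, {u : G // u ∈ U ∧ QuotientGroup.mk' N u = y i} :=
    { toFun := fun x i => ⟨x.1 i, x.2.1 i, x.2.2 i⟩
      invFun := fun f => ⟨fun i => (f i).1, fun i => (f i).2.1, fun i => (f i).2.2⟩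
      left_inv := fun x => rfl
      right_inv := fun f => rfl }
  rw [Nat.card_congr e, Nat.card_pi]
  calc ∏ i : Fin n, Nat.card {u : G // u ∈ U ∧ QuotientGroup.mk' N u = y i}
      = ∏ _i : Fin n, Nat.card ↥(U ⊓ N) :=
        Finset.prod_congr rfl fun i _ => card_fiber N U (y i) hU
    _ = Nat.card ↥(U ⊓ N) ^ n := by rw [Finset.prod_const, Finset.card_univ, Fintype.card_fin]

def liftsEquivSigma (N U : Subgroup G) [N.Normal] (y : Fin n → G ⧸ N) :
    lifts N U y ≃ Σ V : {V : Subgroup G // V ≤ U}, gens N V.1 y := by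
  refine ⟨fun x => ⟨⟨Subgroup.closure (Set.range x.1), ?_⟩, x.1, rfl, x.2.2⟩,
    fun p => ⟨p.2.1, fun i => ?_, p.2.2.2⟩, fun x => rfl, fun p => ?_⟩
  · exact (Subgroup.closure_le _).2 (Set.range_subset_iff.2 x.2.1)
  · exact p.1.2 ((le_of_eq p.2.2.1) (Subgroup.subset_closure ⟨i, rfl⟩))
  · obtain ⟨⟨V, hV⟩, x, hx, hxy⟩ := p
    refine Sigma.ext (Subtype.ext hx) ((Subtype.heq_iff_coe_eq ?_).2 rfl)
    intro z
    simp only [gens, Set.mem_setOf_eq, hx]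

end aux

section part2

variable {G : Type*} [Group G] [Finite G] {n : ℕ}

lemma gens_eq_empty (N U : Subgroup G) [N.Normal] {y : Fin n → G ⧸ N}
    (hy : Subgroup.closure (Set.range y) = ⊤)
    (hU : U.map (QuotientGroup.mk' N) ≠ ⊤) : gens N U y = ∅ := by
  rw [Set.eq_empty_iff_forall_notMem]
  rintro x ⟨hx, hxy⟩
  apply hU
  have hr : (QuotientGroup.mk' N) '' (Set.range x) = Set.range y := by
    rw [← Set.range_comp, show ((QuotientGroup.mk' N : G →* G ⧸ N) ∘ x) = y from funext hxy]
  rw [← hx, MonoidHom.map_closure, hr, hy]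

lemma card_lifts_eq_sum (N U : Subgroup G) [N.Normal]
    [Fintype {V : Subgroup G // V ≤ U}] (y : Fin n → G ⧸ N) :
    Nat.card (lifts N U y) =
      ∑ V : {V : Subgroup G // V ≤ U}, Nat.card (gens N V.1 y) := by
  rw [Nat.card_congr (liftsEquivSigma N U y), natCard_sigma]

lemma card_lt_of_lt {V U : Subgroup G} (h : V < U) : Nat.card ↥V < Nat.card ↥U := by
  have : (V : Set G) ⊂ (U : Set G) := SetLike.coe_ssubset_coe.2 h
  have h2 := Set.ncard_lt_ncard this (Set.toFinite _)
  rw [← Nat.card_coe_set_eq, ← Nat.card_coe_set_eq] at h2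
  exact h2

lemma gens_card_const (N : Subgroup G) [N.Normal] {y y' : Fin n → G ⧸ N}
    (hy : Subgroup.closure (Set.range y) = ⊤) (hy' : Subgroup.closure (Set.range y') = ⊤)
    (U : Subgroup G) : Nat.card (gens N U y) = Nat.card (gens N U y') := by
  classical
  haveI : Finite (Subgroup G) :=
    Finite.of_injective (fun V : Subgroup G => (V : Set G)) SetLike.coe_injective
  suffices H : ∀ k (U : Subgroup G), Nat.card ↥U ≤ k →
      Nat.card (gens N U y) = Nat.card (gens N U y') from H _ U le_rfl
  intro k
  induction k using Nat.strong_induction_on with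
  | _ k ih =>
    intro U hUk
    by_cases hmap : U.map (QuotientGroup.mk' N) = ⊤
    · haveI := Fintype.ofFinite {V : Subgroup G // V ≤ U}
      have hsum : ∑ V : {V : Subgroup G // V ≤ U}, Nat.card (gens N V.1 y) =
          ∑ V : {V : Subgroup G // V ≤ U}, Nat.card (gens N V.1 y') := by
        rw [← card_lifts_eq_sum, ← card_lifts_eq_sum, card_lifts N U y hmap,
          card_lifts N U y' hmap]
      have ha : (⟨U, le_rfl⟩ : {V : Subgroup G // V ≤ U}) ∈ Finset.univ := Finset.mem_univ _
      rw [← Finset.add_sum_erase _ _ ha, ← Finset.add_sum_erase _ _ ha] at hsum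
      have herase : ∑ V ∈ Finset.univ.erase (⟨U, le_rfl⟩ : {V : Subgroup G // V ≤ U}),
          Nat.card (gens N V.1 y) =
          ∑ V ∈ Finset.univ.erase (⟨U, le_rfl⟩ : {V : Subgroup G // V ≤ U}),
          Nat.card (gens N V.1 y') := by
        refine Finset.sum_congr rfl fun V hV => ?_
        have hne : V.1 ≠ U := fun h => (Finset.mem_erase.1 hV).1 (Subtype.ext h)
        have hlt : Nat.card ↥V.1 < Nat.card ↥U := card_lt_of_lt (lt_of_le_of_ne V.2 hne)
        exact ih _ (lt_of_lt_of_le hlt hUk) V.1 le_rfl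
      rw [herase] at hsum
      exact Nat.add_right_cancel hsum
    · rw [gens_eq_empty N U hy hmap, gens_eq_empty N U hy' hmap]

lemma gaschutz (N : Subgroup G) [N.Normal] (hG : ∃ x : Fin n → G, Subgroup.closure (Set.range x) = ⊤)
    (y : Fin n → G ⧸ N) (hy : Subgroup.closure (Set.range y) = ⊤) :
    ∃ x : Fin n → G, Subgroup.closure (Set.range x) = ⊤ ∧
      ∀ i, QuotientGroup.mk' N (x i) = y i := by
  obtain ⟨x₀, hx₀⟩ := hG
  set y₀ : Fin n → G ⧸ N := fun i => QuotientGroup.mk' N (x₀ i) with hy₀def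
  have hy₀ : Subgroup.closure (Set.range y₀) = ⊤ := by
    have hr : Set.range y₀ = (QuotientGroup.mk' N) '' (Set.range x₀) := by
      rw [← Set.range_comp]; rfl
    rw [hr, ← MonoidHom.map_closure, hx₀,
      Subgroup.map_top_of_surjective _ (QuotientGroup.mk'_surjective N)]
  have hmem : x₀ ∈ gens N ⊤ y₀ := ⟨hx₀, fun i => rfl⟩
  have hpos : 0 < Nat.card (gens N ⊤ y₀) :=
    Nat.card_pos_iff.2 ⟨⟨⟨x₀, hmem⟩⟩, Set.toFinite _⟩
  rw [gens_card_const N hy₀ hy ⊤] at hpos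
  obtain ⟨⟨x, hx1, hx2⟩⟩ := (Nat.card_pos_iff.1 hpos).1
  exact ⟨x, hx1, hx2⟩

end part2

/-- Any `n`-generated subdirect product of quotients of `G` is a quotient of `H(n,G)`. -/
theorem subdirect_of_quotients_is_quotient_of_cover (G : Type*) [Group G] [Finite G]
    (n : ℕ) (hG : ∃ x : Fin n → G, IsGenSeq x) (m : ℕ)
    (N : Fin m → Subgroup G) [∀ i, (N i).Normal]
    (H : Subgroup (∀ i, G ⧸ N i))
    (hsub : ∀ i, Function.Surjective fun h : H => (h : ∀ j, G ⧸ N j) i)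
    (hH : ∃ x : Fin n → H, IsGenSeq x) :
    ∃ φ : HomogeneousCover n G →* H, Function.Surjective φ := by
  obtain ⟨h, hh⟩ := hH
  have hh' : Subgroup.closure (Set.range h) = ⊤ := hh
  have hG' : ∃ x : Fin n → G, Subgroup.closure (Set.range x) = ⊤ := hG
  set f : FreeGroup (Fin n) →* H := FreeGroup.lift h with hfdef
  have hf : Function.Surjective f := by
    rw [← MonoidHom.range_eq_top, hfdef, FreeGroup.range_lift_eq_closure, hh']
  have hker : coverKer n G ≤ f.ker := by
    intro w hw
    simp only [coverKer, Subgroup.mem_iInf, Set.mem_setOf_eq] at hw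
    rw [MonoidHom.mem_ker]
    have hcoord : ∀ i, ((f w : ∀ j, G ⧸ N j)) i = 1 := by
      intro i
      set c : H →* G ⧸ N i := (Pi.evalMonoidHom (fun j => G ⧸ N j) i).comp H.subtype with hcdef
      have hcs : Function.Surjective c := hsub i
      set y : Fin n → G ⧸ N i := fun j => c (h j) with hydef
      have hy : Subgroup.closure (Set.range y) = ⊤ := by
        have hr : Set.range y = c '' Set.range h := by rw [← Set.range_comp]; rfl
        rw [hr, ← MonoidHom.map_closure, hh', Subgroup.map_top_of_surjective _ hcs]
      obtain ⟨x, hxgen, hxy⟩ := gaschutz (N i) hG' y hy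
      set q : FreeGroup (Fin n) →* G := FreeGroup.lift x with hqdef
      have hq : Function.Surjective q := by
        rw [← MonoidHom.range_eq_top, hqdef, FreeGroup.range_lift_eq_closure, hxgen]
      have hcomp : (QuotientGroup.mk' (N i)).comp q = c.comp f := by
        apply FreeGroup.ext_hom
        intro a
        simp only [MonoidHom.comp_apply, hqdef, hfdef, FreeGroup.lift_apply_of]
        rw [hxy a]
      have hwq : q w = 1 := hw q hq
      have : c (f w) = 1 := by
        have := congrArg (fun φ : FreeGroup (Fin n) →* G ⧸ N i => φ w) hcomp
        simp only [MonoidHom.comp_apply] at this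
        rw [← this, hwq, map_one]
      exact this
    exact Subtype.ext (funext fun i => hcoord i)
  refine ⟨QuotientGroup.lift (coverKer n G) f hker, ?_⟩
  intro b
  obtain ⟨w, hwb⟩ := hf b
  exact ⟨QuotientGroup.mk w, by rwa [QuotientGroup.lift_mk']⟩
end

section
/- Let G be a finite group that is homogeneous of rank n, and suppose there exists a surjective homomorphism f : G → H onto a finite group H. Then for any s = (s₁,…,sₙ) ∈ Γ_n(H) and any t = (t₁,…,tₙ) ∈ Γ_n(G), there exists a surjective homomorphism h : G → H such that h(tᵢ) = sᵢ for all i ≤ n. -/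
/-!
The heart of the matter is Gaschütz's lemma: if `φ : K →* Q` is a surjection with `K` finite
and `K` has a generating sequence indexed by `ι`, then every generating sequence of `Q` indexed
by `ι` lifts along `φ` to a generating sequence of `K`. Indeed, the number of lifts of a
generating sequence `w` of `Q` that generate `K` does not depend on `w`: every sequence has
`|ker φ|^|ι|` lifts, and sorting them by the subgroup `V` they generate, those that generate a
proper `V` are the generating lifts of `w` along `φ|V`, counted independently of `w` by
induction on `|K|`. Lifting `s` to a generating sequence `v` of `G` and moving `t`
to `v` by an automorphism, the composite of that automorphism with `f` is the surjection sought.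
-/

open Subgroup

section Gaschuetz

variable {K Q ι : Type*} [Group K] [Group Q]

def liftsGenerating (φ : K →* Q) (w : ι → Q) (V : Subgroup K) : Set (ι → K) :=
  {v | φ ∘ v = w ∧ closure (Set.range v) = V}

lemma liftsGenerating_eq_empty {φ : K →* Q} {w : ι → Q} {V : Subgroup K}
    (hV : V.map φ ≠ closure (Set.range w)) : liftsGenerating φ w V = ∅ := by
  refine Set.eq_empty_of_forall_notMem fun v ⟨hvw, hvV⟩ => hV ?_
  rw [← hvV, MonoidHom.map_closure, ← Set.range_comp, hvw]

lemma closure_range_subtype_comp_eq_iff {V : Subgroup K} (u : ι → V) :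
    closure (Set.range (V.subtype ∘ u)) = V ↔ closure (Set.range u) = ⊤ := by
  conv_lhs => rw [Set.range_comp, ← MonoidHom.map_closure]
  conv_lhs => rhs; rw [← range_subtype V, MonoidHom.range_eq_map]
  exact map_subtype_inj

lemma card_liftsGenerating_eq_restrict (φ : K →* Q) (w : ι → Q) (V : Subgroup K) :
    Nat.card (liftsGenerating φ w V) = Nat.card (liftsGenerating (φ.comp V.subtype) w ⊤) :=
  Nat.card_congr
    { toFun := fun v => ⟨fun i => ⟨v.1 i, v.2.2.le (subset_closure (Set.mem_range_self i))⟩,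
        v.2.1, (closure_range_subtype_comp_eq_iff _).1 v.2.2⟩
      invFun := fun u =>
        ⟨V.subtype ∘ u.1, u.2.1, (closure_range_subtype_comp_eq_iff _).2 u.2.2⟩
      left_inv := fun _ => rfl
      right_inv := fun _ => rfl }

lemma sum_card_liftsGenerating [Finite K] [Finite ι] [Fintype (Subgroup K)]
    (φ : K →* Q) (w : ι → Q) :
    ∑ V, Nat.card (liftsGenerating φ w V) = Nat.card (φ.compLeft ι ⁻¹' {w}) := by
  rw [← Nat.card_sigma]
  exact Nat.card_congr
    { toFun := fun p => ⟨p.2.1, p.2.2.1⟩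
      invFun := fun v => ⟨closure (Set.range v.1), v.1, v.2, rfl⟩
      left_inv := by rintro ⟨V, v, hvw, rfl⟩; rfl
      right_inv := fun _ => rfl }

theorem card_liftsGenerating_top_eq [Finite K] [Finite ι] {φ : K →* Q}
    (hφ : Function.Surjective φ) {w w' : ι → Q} (hw : closure (Set.range w) = ⊤)
    (hw' : closure (Set.range w') = ⊤) :
    Nat.card (liftsGenerating φ w ⊤) = Nat.card (liftsGenerating φ w' ⊤) := by
  induction hK : Nat.card K using Nat.strong_induction_on generalizing K with
  | _ c ih =>
    have h_proper : ∀ V : Subgroup K, V ≠ ⊤ →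
        Nat.card (liftsGenerating φ w V) = Nat.card (liftsGenerating φ w' V) := by
      intro V hV
      by_cases hVφ : V.map φ = ⊤
      · have hsurj : Function.Surjective (φ.comp V.subtype) := by
          rw [← MonoidHom.range_eq_top, MonoidHom.range_comp, range_subtype, hVφ]
        have hcard : Nat.card V < c :=
          hK ▸ (card_le_card_group V).lt_of_ne ((card_eq_iff_eq_top V).not.2 hV)
        rw [card_liftsGenerating_eq_restrict φ w V, card_liftsGenerating_eq_restrict φ w' V]
        exact ih _ hcard hsurj rfl
      · rw [liftsGenerating_eq_empty (hw ▸ hVφ), liftsGenerating_eq_empty (hw' ▸ hVφ)]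
    classical
    let _ := Fintype.ofFinite (Subgroup K)
    have h_total :
        ∑ V, Nat.card (liftsGenerating φ w V) = ∑ V, Nat.card (liftsGenerating φ w' V) := by
      rw [sum_card_liftsGenerating, sum_card_liftsGenerating,
        Nat.card_congr (MonoidHom.fiberEquivOfSurjective hφ.comp_left w w')]
    rw [← Finset.add_sum_erase _ _ (Finset.mem_univ ⊤),
      ← Finset.add_sum_erase _ _ (Finset.mem_univ ⊤),
      Finset.sum_congr rfl fun V hV => h_proper V (Finset.ne_of_mem_erase hV)] at h_total
    exact Nat.add_right_cancel h_total

theorem exists_generating_lift [Finite K] [Finite ι] {φ : K →* Q}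
    (hφ : Function.Surjective φ) {t : ι → K} (ht : closure (Set.range t) = ⊤) {w : ι → Q}
    (hw : closure (Set.range w) = ⊤) :
    ∃ v : ι → K, closure (Set.range v) = ⊤ ∧ φ ∘ v = w := by
  have hφt : closure (Set.range (φ ∘ t)) = ⊤ := by
    rw [Set.range_comp, ← MonoidHom.map_closure, ht, map_top_of_surjective φ hφ]
  have : Nonempty (liftsGenerating φ (φ ∘ t) ⊤) := ⟨⟨t, rfl, ht⟩⟩
  have hpos : 0 < Nat.card (liftsGenerating φ w ⊤) := by
    rw [card_liftsGenerating_top_eq hφ hw hφt]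
    exact Nat.card_pos
  obtain ⟨⟨v, hvw, hv⟩⟩ := (Nat.card_pos_iff.1 hpos).1
  exact ⟨v, hv, hvw⟩

end Gaschuetz

theorem homogeneous_surjection_on_genSeqs_general (G H : Type*) [Group G] [Finite G]
    [Group H] (n : ℕ) (hG : IsHomogeneous G n)
    (f : G →* H) (hf : Function.Surjective f)
    (s : Fin n → H) (hs : IsGenSeq s) (t : Fin n → G) (ht : IsGenSeq t) :
    ∃ h : G →* H, Function.Surjective h ∧ ∀ i, h (t i) = s i := by
  obtain ⟨v, hv, hvs⟩ := exists_generating_lift hf ht hs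
  obtain ⟨α, hα⟩ := hG.2 t v ht hv
  exact ⟨f.comp α.toMonoidHom, hf.comp α.surjective, fun i => by simp [hα i, ← hvs]⟩

/-- For a homogeneous group `G` of rank `n` surjecting onto `H`, any generating
sequence of `G` can be mapped to any generating sequence of `H` by some surjection. -/
theorem homogeneous_surjection_on_genSeqs (G H : Type*) [Group G] [Finite G]
    [Group H] [Finite H] (n : ℕ) (hG : IsHomogeneous G n)
    (f : G →* H) (hf : Function.Surjective f)
    (s : Fin n → H) (hs : IsGenSeq s) (t : Fin n → G) (ht : IsGenSeq t) :
    ∃ h : G →* H, Function.Surjective h ∧ ∀ i, h (t i) = s i :=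
  homogeneous_surjection_on_genSeqs_general G H n hG f hf s hs t ht
end

section
/- Let G be a finite group that can be generated by n elements and let π : H(n,G) → G be any surjective homomorphism. Then for any finite group H that is homogeneous of rank n and any surjective homomorphism j : H → G, there exists a surjective homomorphism f : H → H(n,G) such that j = π ∘ f. -/
open Subgroup

section Gaschutz

variable {H G : Type*} [Group H] [Group G] [Fintype H] {n : ℕ}

open Classical in
/-- Lifts of the tuple `g` that lie in the subgroup `U`. -/
noncomputable def gLf (φ : H →* G) (U : Subgroup H) (g : Fin n → G) : Finset (Fin n → H) :=
  Finset.univ.filter fun h => (∀ i, h i ∈ U) ∧ ∀ i, φ (h i) = g i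

open Classical in
/-- Lifts of the tuple `g` that generate exactly the subgroup `U`. -/
noncomputable def gTf (φ : H →* G) (U : Subgroup H) (g : Fin n → G) : Finset (Fin n → H) :=
  Finset.univ.filter fun h => closure (Set.range h) = U ∧ ∀ i, φ (h i) = g i

lemma mem_gLf {φ : H →* G} {U : Subgroup H} {g : Fin n → G} {h : Fin n → H} :
    h ∈ gLf φ U g ↔ (∀ i, h i ∈ U) ∧ ∀ i, φ (h i) = g i := by
  simp [gLf]

lemma mem_gTf {φ : H →* G} {U : Subgroup H} {g : Fin n → G} {h : Fin n → H} :
    h ∈ gTf φ U g ↔ closure (Set.range h) = U ∧ ∀ i, φ (h i) = g i := by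
  simp [gTf]

lemma gLf_card_indep (φ : H →* G) (U : Subgroup H) (hU : U.map φ = ⊤)
    (g g' : Fin n → G) : (gLf φ U g).card = (gLf φ U g').card := by
  have hex : ∀ a : G, ∃ u : H, u ∈ U ∧ φ u = a := by
    intro a
    have : a ∈ U.map φ := hU ▸ mem_top a
    simpa [Subgroup.mem_map] using this
  choose u hu hφu using fun i => hex (g i)
  choose u' hu' hφu' using fun i => hex (g' i)
  apply Finset.card_bij' (fun h _ => fun i => u' i * (u i)⁻¹ * h i)
    (fun h _ => fun i => u i * (u' i)⁻¹ * h i)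
  · intro h hh
    rw [mem_gLf] at hh ⊢
    refine ⟨fun i => mul_mem (mul_mem (hu' i) (inv_mem (hu i))) (hh.1 i), fun i => ?_⟩
    simp [map_mul, hφu', hφu, hh.2 i]
  · intro h hh
    rw [mem_gLf] at hh ⊢
    refine ⟨fun i => mul_mem (mul_mem (hu i) (inv_mem (hu' i))) (hh.1 i), fun i => ?_⟩
    simp [map_mul, hφu', hφu, hh.2 i]
  · intro h _; funext i; group
  · intro h _; funext i; group

open Classical in
lemma gLf_card_eq_sum [Fintype (Subgroup H)] (φ : H →* G) (U : Subgroup H) (g : Fin n → G) :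
    (gLf φ U g).card = ∑ V ∈ Finset.univ.filter (· ≤ U), (gTf φ V g).card := by
  rw [Finset.card_eq_sum_card_fiberwise
    (f := fun h : Fin n → H => closure (Set.range h))
    (t := Finset.univ.filter (· ≤ U))]
  · apply Finset.sum_congr rfl
    intro V hV
    congr 1
    ext h
    simp only [Finset.mem_filter, mem_gLf, mem_gTf]
    constructor
    · rintro ⟨⟨-, h2⟩, h3⟩; exact ⟨h3, h2⟩
    · rintro ⟨h3, h2⟩
      have hle : V ≤ U := (Finset.mem_filter.mp hV).2
      refine ⟨⟨fun i => hle ?_, h2⟩, h3⟩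
      rw [← h3]
      exact subset_closure (Set.mem_range_self i)
  · intro h hh
    rw [Finset.mem_coe, mem_gLf] at hh
    simp only [Finset.mem_coe, Finset.mem_filter, Finset.mem_univ, true_and]
    exact (closure_le U).mpr (by rintro x ⟨i, rfl⟩; exact hh.1 i)

lemma gTf_empty_of_not_surj (φ : H →* G) (U : Subgroup H) (hU : U.map φ ≠ ⊤)
    {g : Fin n → G} (hg : closure (Set.range g) = ⊤) : gTf φ U g = ∅ := by
  rw [Finset.eq_empty_iff_forall_notMem]
  intro h hh
  rw [mem_gTf] at hh
  apply hU
  have : φ ∘ h = g := funext hh.2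
  rw [← hh.1, MonoidHom.map_closure, ← Set.range_comp, this, hg]

open Classical in
lemma gTf_card_indep (φ : H →* G) (U : Subgroup H)
    {g g' : Fin n → G} (hg : closure (Set.range g) = ⊤) (hg' : closure (Set.range g') = ⊤) :
    (gTf φ U g).card = (gTf φ U g').card := by
  letI : Fintype (Subgroup H) := Fintype.ofFinite _
  induction U using WellFoundedLT.induction with
  | ind U ih =>
    by_cases hU : U.map φ = ⊤
    · have key := gLf_card_indep φ U hU g g'
      rw [gLf_card_eq_sum φ U g, gLf_card_eq_sum φ U g'] at key
      have hsplit : (Finset.univ.filter (· ≤ U) : Finset (Subgroup H)) =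
          insert U (Finset.univ.filter (· < U)) := by
        ext V
        simp [le_iff_lt_or_eq, or_comm]
      rw [hsplit, Finset.sum_insert (by simp), Finset.sum_insert (by simp)] at key
      have hsum : ∑ V ∈ Finset.univ.filter (· < U), (gTf φ V g).card =
          ∑ V ∈ Finset.univ.filter (· < U), (gTf φ V g').card := by
        apply Finset.sum_congr rfl
        intro V hV
        exact ih V (Finset.mem_filter.mp hV).2
      omega
    · rw [gTf_empty_of_not_surj φ U hU hg, gTf_empty_of_not_surj φ U hU hg']

end Gaschutz

/-- **Gaschütz's lemma**. -/
lemma gaschutz_s14 {H G : Type*} [Group H] [Group G] [Finite H] (φ : H →* G)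
    (hφ : Function.Surjective φ) {n : ℕ} (h₀ : Fin n → H)
    (hh₀ : closure (Set.range h₀) = ⊤) (g : Fin n → G) (hg : closure (Set.range g) = ⊤) :
    ∃ h : Fin n → H, closure (Set.range h) = ⊤ ∧ ∀ i, φ (h i) = g i := by
  letI := Fintype.ofFinite H
  have hg₀ : closure (Set.range (φ ∘ h₀)) = ⊤ := by
    rw [Set.range_comp, ← MonoidHom.map_closure, hh₀]
    rwa [← MonoidHom.range_eq_map, MonoidHom.range_eq_top]
  have h1 : h₀ ∈ gTf φ ⊤ (φ ∘ h₀) := mem_gTf.mpr ⟨hh₀, fun i => rfl⟩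
  have key := gTf_card_indep φ (⊤ : Subgroup H) hg hg₀
  have hpos : 0 < (gTf φ ⊤ g).card := by
    rw [key]
    exact Finset.card_pos.mpr ⟨h₀, h1⟩
  obtain ⟨h, hh⟩ := Finset.card_pos.mp hpos
  exact ⟨h, (mem_gTf.mp hh).1, (mem_gTf.mp hh).2⟩

/-- Universal property: any surjection from a rank-`n` homogeneous group `H` onto `G`
factors through any given surjection `π : H(n,G) → G` via a surjection `H → H(n,G)`. -/
theorem cover_universal_property (G : Type*) [Group G] [Finite G] (n : ℕ)
    (hG : ∃ x : Fin n → G, IsGenSeq x)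
    (π : HomogeneousCover n G →* G) (hπ : Function.Surjective π)
    (H : Type*) [Group H] [Finite H] (hH : IsHomogeneous H n)
    (j : H →* G) (hj : Function.Surjective j) :
    ∃ f : H →* HomogeneousCover n G, Function.Surjective f ∧ π.comp f = j := by
  classical
  obtain ⟨h₀, hh₀⟩ := hH.1
  set q : FreeGroup (Fin n) →* HomogeneousCover n G := QuotientGroup.mk' (coverKer n G) with hq
  have hqsurj : Function.Surjective q := QuotientGroup.mk'_surjective _
  set g : Fin n → G := fun i => π (q (FreeGroup.of i)) with hgdef
  have hliftg : FreeGroup.lift g = π.comp q := FreeGroup.ext_hom _ _ (by simp [g])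
  have hg : Subgroup.closure (Set.range g) = ⊤ := by
    rw [← FreeGroup.range_lift_eq_closure, hliftg, MonoidHom.range_eq_top]
    exact hπ.comp hqsurj
  obtain ⟨h, hhgen, hhj⟩ := gaschutz_s14 j hj h₀ hh₀ g hg
  set ψ : FreeGroup (Fin n) →* H := FreeGroup.lift h with hψdef
  have hψsurj : Function.Surjective ψ := by
    rw [← MonoidHom.range_eq_top, hψdef, FreeGroup.range_lift_eq_closure]
    exact hhgen
  -- the kernel of ψ is contained in the cover kernel
  have hker : ψ.ker ≤ coverKer n G := by
    intro w hw
    simp only [coverKer, Subgroup.mem_iInf, Set.mem_setOf_eq]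
    intro θ hθ
    set gθ : Fin n → G := fun i => θ (FreeGroup.of i) with hgθdef
    have hliftθ : FreeGroup.lift gθ = θ := FreeGroup.ext_hom _ _ (by simp [gθ])
    have hgθ : Subgroup.closure (Set.range gθ) = ⊤ := by
      rw [← FreeGroup.range_lift_eq_closure, hliftθ, MonoidHom.range_eq_top]
      exact hθ
    obtain ⟨h', hh'gen, hh'j⟩ := gaschutz_s14 j hj h₀ hh₀ gθ hgθ
    obtain ⟨α, hα⟩ := hH.2 h h' hhgen hh'gen
    have heq : (j.comp α.toMonoidHom).comp ψ = θ := by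
      refine FreeGroup.ext_hom _ _ (fun i => ?_)
      simp only [MonoidHom.comp_apply, hψdef, FreeGroup.lift_apply_of, MulEquiv.coe_toMonoidHom]
      rw [hα, hh'j, hgθdef]
    rw [MonoidHom.mem_ker] at hw ⊢
    rw [← heq]
    simp [hw]
  -- build f
  have hcond : ∀ w ∈ ψ.ker, q w = 1 := fun w hw =>
    (QuotientGroup.eq_one_iff w).mpr (hker hw)
  set e := QuotientGroup.quotientKerEquivOfSurjective ψ hψsurj with hedef
  set f : H →* HomogeneousCover n G :=
    (QuotientGroup.lift ψ.ker q hcond).comp e.symm.toMonoidHom with hfdef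
  have hfψ : ∀ w, f (ψ w) = q w := by
    intro w
    have h1 : e (QuotientGroup.mk w) = ψ w := rfl
    have h2 : e.symm (ψ w) = QuotientGroup.mk w := by
      rw [← h1, MulEquiv.symm_apply_apply]
    simp only [hfdef, MonoidHom.comp_apply, MulEquiv.coe_toMonoidHom, h2]
    rfl
  have hπq : π.comp q = j.comp ψ := by
    refine FreeGroup.ext_hom _ _ (fun i => ?_)
    simp only [MonoidHom.comp_apply, hψdef, FreeGroup.lift_apply_of]
    rw [hhj]
  refine ⟨f, ?_, ?_⟩
  · intro y
    obtain ⟨w, rfl⟩ := hqsurj y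
    exact ⟨ψ w, hfψ w⟩
  · ext x
    obtain ⟨w, rfl⟩ := hψsurj x
    have := DFunLike.congr_fun hπq w
    simpa [hfψ w] using this
end

section
/- Let N and K be finite groups of coprime orders such that the direct product G = N × K can be generated by n elements. Then H(n, N × K) is isomorphic to H(n,N) × H(n,K). -/
open Function Pointwise

lemma mem_coverKer {n : ℕ} {G : Type*} [Group G] {x : FreeGroup (Fin n)} :
    x ∈ coverKer n G ↔ ∀ f : FreeGroup (Fin n) →* G, Surjective f → f x = 1 := by
  simp [coverKer, Subgroup.mem_iInf, MonoidHom.mem_ker, Set.mem_setOf_eq]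

lemma surj_of_surj_comps {G N K : Type*} [Group G] [Group N] [Finite N] [Group K] [Finite K]
    (hcop : Nat.Coprime (Nat.card N) (Nat.card K)) (f : G →* N × K)
    (h1 : Surjective ((MonoidHom.fst N K).comp f))
    (h2 : Surjective ((MonoidHom.snd N K).comp f)) : Surjective f := by
  rw [← MonoidHom.range_eq_top]
  have d1 : Nat.card N ∣ Nat.card f.range := by
    refine Subgroup.card_dvd_of_surjective ((MonoidHom.fst N K).comp f.range.subtype) ?_
    intro a
    obtain ⟨g, hg⟩ := h1 a
    exact ⟨⟨f g, ⟨g, rfl⟩⟩, hg⟩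
  have d2 : Nat.card K ∣ Nat.card f.range := by
    refine Subgroup.card_dvd_of_surjective ((MonoidHom.snd N K).comp f.range.subtype) ?_
    intro a
    obtain ⟨g, hg⟩ := h2 a
    exact ⟨⟨f g, ⟨g, rfl⟩⟩, hg⟩
  have dprod : Nat.card N * Nat.card K ∣ Nat.card f.range := hcop.mul_dvd_of_dvd_of_dvd d1 d2
  have dle : Nat.card f.range ∣ Nat.card (N × K) := Subgroup.card_subgroup_dvd_card _
  rw [Nat.card_prod] at dle
  have : Nat.card f.range = Nat.card (N × K) := by
    rw [Nat.card_prod]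
    exact Nat.dvd_antisymm dle dprod
  exact Subgroup.eq_top_of_card_eq _ this

lemma coverKer_prod {n : ℕ} {N K : Type*} [Group N] [Finite N] [Group K] [Finite K]
    (hcop : Nat.Coprime (Nat.card N) (Nat.card K))
    (eN : ∃ f : FreeGroup (Fin n) →* N, Surjective f)
    (eK : ∃ f : FreeGroup (Fin n) →* K, Surjective f) :
    coverKer n (N × K) = coverKer n N ⊓ coverKer n K := by
  ext x
  rw [Subgroup.mem_inf, mem_coverKer, mem_coverKer, mem_coverKer]
  constructor
  · intro h
    obtain ⟨gN, hgN⟩ := eN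
    obtain ⟨gK, hgK⟩ := eK
    constructor
    · intro f hf
      have hs : Surjective (f.prod gK) := by
        apply surj_of_surj_comps hcop
        · simpa [MonoidHom.fst_comp_prod] using hf
        · simpa [MonoidHom.snd_comp_prod] using hgK
      have := h _ hs
      exact congrArg Prod.fst this
    · intro f hf
      have hs : Surjective (gN.prod f) := by
        apply surj_of_surj_comps hcop
        · simpa [MonoidHom.fst_comp_prod] using hgN
        · simpa [MonoidHom.snd_comp_prod] using hf
      have := h _ hs
      exact congrArg Prod.snd this
  · rintro ⟨h1, h2⟩ f hf
    have hf1 : Surjective ((MonoidHom.fst N K).comp f) := Prod.fst_surjective.comp hf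
    have hf2 : Surjective ((MonoidHom.snd N K).comp f) := Prod.snd_surjective.comp hf
    have e1 := h1 _ hf1
    have e2 := h2 _ hf2
    exact Prod.ext e1 e2

/-- embedding of the cover into a finite product -/
noncomputable def coverPi (n : ℕ) (G : Type*) [Group G] :
    FreeGroup (Fin n) →* ({f : FreeGroup (Fin n) →* G // Surjective f} → G) :=
  Pi.monoidHom fun s => s.1

lemma ker_coverPi (n : ℕ) (G : Type*) [Group G] :
    (coverPi n G).ker = coverKer n G := by
  ext x
  rw [MonoidHom.mem_ker, mem_coverKer]
  constructor
  · intro h f hf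
    exact congrFun h ⟨f, hf⟩
  · intro h
    funext s
    exact h s.1 s.2

instance finite_homs (n : ℕ) (G : Type*) [Group G] [Finite G] :
    Finite (FreeGroup (Fin n) →* G) :=
  Finite.of_equiv _ FreeGroup.lift

instance finite_cover (n : ℕ) (G : Type*) [Group G] [Finite G] :
    Finite (HomogeneousCover n G) := by
  have : Finite (FreeGroup (Fin n) ⧸ (coverPi n G).ker) :=
    Finite.of_injective _ (QuotientGroup.kerLift_injective (coverPi n G))
  exact Finite.of_equiv _ (QuotientGroup.quotientMulEquivOfEq (ker_coverPi n G)).toEquiv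

lemma card_cover_dvd_pow (n : ℕ) (G : Type*) [Group G] [Finite G] :
    ∃ m, Nat.card (HomogeneousCover n G) ∣ (Nat.card G) ^ m := by
  refine ⟨Nat.card {f : FreeGroup (Fin n) →* G // Surjective f}, ?_⟩
  have h1 : Nat.card (HomogeneousCover n G) =
      Nat.card (FreeGroup (Fin n) ⧸ (coverPi n G).ker) :=
    Nat.card_congr (QuotientGroup.quotientMulEquivOfEq (ker_coverPi n G)).toEquiv.symm
  rw [h1, ← Nat.card_fun]
  · exact Subgroup.card_dvd_of_injective (QuotientGroup.kerLift (coverPi n G))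
      (QuotientGroup.kerLift_injective _)

lemma sup_coverKer_eq_top {n : ℕ} {N K : Type*} [Group N] [Finite N] [Group K] [Finite K]
    (hcop : Nat.Coprime (Nat.card N) (Nat.card K)) :
    coverKer n N ⊔ coverKer n K = ⊤ := by
  set A := coverKer n N
  set B := coverKer n K
  -- the quotient by A ⊔ B is a common quotient of the two covers
  have sA : Surjective (QuotientGroup.map A (A ⊔ B) (MonoidHom.id _) le_sup_left) := by
    intro y
    obtain ⟨x, rfl⟩ := QuotientGroup.mk_surjective y
    exact ⟨QuotientGroup.mk x, rfl⟩
  have sB : Surjective (QuotientGroup.map B (A ⊔ B) (MonoidHom.id _) le_sup_right) := by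
    intro y
    obtain ⟨x, rfl⟩ := QuotientGroup.mk_surjective y
    exact ⟨QuotientGroup.mk x, rfl⟩
  have dA : Nat.card (FreeGroup (Fin n) ⧸ (A ⊔ B)) ∣ Nat.card (HomogeneousCover n N) :=
    Subgroup.card_dvd_of_surjective _ sA
  have dB : Nat.card (FreeGroup (Fin n) ⧸ (A ⊔ B)) ∣ Nat.card (HomogeneousCover n K) :=
    Subgroup.card_dvd_of_surjective _ sB
  obtain ⟨m1, hm1⟩ := card_cover_dvd_pow n N
  obtain ⟨m2, hm2⟩ := card_cover_dvd_pow n K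
  have hcop' : Nat.Coprime (Nat.card (HomogeneousCover n N)) (Nat.card (HomogeneousCover n K)) :=
    Nat.Coprime.coprime_dvd_left hm1 (Nat.Coprime.coprime_dvd_right hm2 (Nat.Coprime.pow _ _ hcop))
  have hone : Nat.card (FreeGroup (Fin n) ⧸ (A ⊔ B)) = 1 :=
    Nat.eq_one_of_dvd_coprimes hcop' dA dB
  have : Subsingleton (FreeGroup (Fin n) ⧸ (A ⊔ B)) := by
    rw [Nat.card_eq_one_iff_unique] at hone
    exact hone.1
  rw [eq_top_iff]
  intro x _
  exact (QuotientGroup.eq_one_iff x).mp (Subsingleton.elim _ _)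

noncomputable def crtIso {G : Type*} [Group G] (A B : Subgroup G) [A.Normal] [B.Normal]
    (h : A ⊔ B = ⊤) : G ⧸ (A ⊓ B) ≃* (G ⧸ A) × (G ⧸ B) := by
  refine (QuotientGroup.quotientMulEquivOfEq ?_).trans
    (QuotientGroup.quotientKerEquivOfSurjective
      ((QuotientGroup.mk' A).prod (QuotientGroup.mk' B)) ?_)
  · rw [MonoidHom.ker_prod, QuotientGroup.ker_mk', QuotientGroup.ker_mk']
  · rintro ⟨ya, yb⟩
    obtain ⟨a, rfl⟩ := QuotientGroup.mk_surjective ya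
    obtain ⟨b, rfl⟩ := QuotientGroup.mk_surjective yb
    have hab : a * b⁻¹ ∈ A ⊔ B := h ▸ Subgroup.mem_top _
    have hab' : a * b⁻¹ ∈ ((A : Set G) * (B : Set G)) := by
      rw [← Subgroup.mul_normal A B]; exact hab
    obtain ⟨α, hα, β, hβ, hαβ⟩ := hab'
    refine ⟨α⁻¹ * a, Prod.ext ?_ ?_⟩
    · show QuotientGroup.mk (α⁻¹ * a) = QuotientGroup.mk a
      rw [QuotientGroup.eq]
      simpa [mul_assoc] using A.inv_mem ((Subgroup.Normal.conj_mem ‹A.Normal› _ (A.inv_mem hα)) a⁻¹)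
    · show QuotientGroup.mk (α⁻¹ * a) = QuotientGroup.mk b
      rw [QuotientGroup.eq]
      have hx : α⁻¹ * a = β * b := by
        have hαβ2 : α * β = a * b⁻¹ := hαβ
        have : a = α * β * b := by rw [hαβ2]; group
        rw [this]; group
      rw [hx]
      simpa [mul_assoc] using (Subgroup.Normal.conj_mem ‹B.Normal› _ (B.inv_mem hβ)) b⁻¹


/-- For finite groups `N, K` of coprime orders with `N × K` `n`-generated,
`H(n, N × K) ≅ H(n,N) × H(n,K)`. -/
theorem cover_of_coprime_product (N K : Type*) [Group N] [Finite N] [Group K] [Finite K]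
    (n : ℕ) (hcop : Nat.Coprime (Nat.card N) (Nat.card K))
    (hgen : ∃ x : Fin n → N × K, IsGenSeq x) :
    Nonempty (HomogeneousCover n (N × K) ≃*
      HomogeneousCover n N × HomogeneousCover n K) := by
  obtain ⟨x, hx⟩ := hgen
  have hπ : Surjective (FreeGroup.lift x) := by
    rw [← MonoidHom.range_eq_top, FreeGroup.range_lift_eq_closure]
    exact hx
  have eN : ∃ f : FreeGroup (Fin n) →* N, Surjective f :=
    ⟨(MonoidHom.fst N K).comp (FreeGroup.lift x), Prod.fst_surjective.comp hπ⟩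
  have eK : ∃ f : FreeGroup (Fin n) →* K, Surjective f :=
    ⟨(MonoidHom.snd N K).comp (FreeGroup.lift x), Prod.snd_surjective.comp hπ⟩
  have heq := coverKer_prod (n := n) hcop eN eK
  exact ⟨(QuotientGroup.quotientMulEquivOfEq heq).trans
    (crtIso _ _ (sup_coverKer_eq_top hcop))⟩
end

section
/- (Hall) Let S be a finite nonabelian simple group and let s₁ = (s₁₁,…,s₁ₙ),…,s_k = (s_{k1},…,s_{kn}) be generating sequences of S of length n. Then the k-tuples ((s₁₁,…,s_{k1}),…,(s₁ₙ,…,s_{kn})) generate the direct product Sᵏ if and only if sᵢ and sⱼ are not equivalent under the action of Aut(S) on Γ_n(S) for all i ≠ j. -/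
open Function

theorem Pi.mul_mulSingle_mul_inv {ι : Type*} [DecidableEq ι] {G : ι → Type*} [∀ i, Group (G i)]
    (u : ∀ i, G i) (i : ι) (a : G i) :
    u * Pi.mulSingle i a * u⁻¹ = Pi.mulSingle i (u i * a * (u i)⁻¹) :=
  funext <| Pi.apply_mulSingle (fun j x => u j * x * (u j)⁻¹) (fun j => by simp) i a

theorem MonoidHom.injective_of_ne_one {G H : Type*} [Group G] [IsSimpleGroup G] [Group H]
    {φ : G →* H} (hφ : φ ≠ 1) : Injective φ := by
  rw [← MonoidHom.ker_eq_bot_iff]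
  exact (MonoidHom.normal_ker φ).eq_bot_or_eq_top.resolve_right (by rwa [MonoidHom.ker_eq_top_iff])

def Fin.consMonoidHom (S : Type*) [Group S] (k : ℕ) : S × (Fin k → S) →* (Fin (k + 1) → S) where
  toFun p := Fin.cons p.1 p.2
  map_one' := Fin.cons_self_tail 1
  map_mul' p q := by ext j; cases j using Fin.cases <;> simp

theorem Fin.consMonoidHom_apply_zero_tail {S : Type*} [Group S] {k : ℕ} (g : Fin (k + 1) → S) :
    Fin.consMonoidHom S k (g 0, Fin.tail g) = g :=
  Fin.cons_self_tail g

section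

variable {S : Type*} [Group S] [IsSimpleGroup S]

theorem MonoidHom.exists_mulEquiv_eq_of_surjective {ι : Type*} [Finite ι]
    (hS : ∃ a b : S, a * b ≠ b * a) (ψ : (ι → S) →* S) (hψ : Surjective ψ) :
    ∃ (i : ι) (f : S ≃* S), ∀ g, ψ g = f (g i) := by
  classical
  set ψ' : ι → S →* S := fun i => ψ.comp (MonoidHom.mulSingle (fun _ => S) i)
  have hnormal : ∀ i, (ψ' i).range.Normal := fun i => by
    refine ⟨?_⟩
    rintro _ ⟨a, rfl⟩ x
    obtain ⟨u, rfl⟩ := hψ x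
    exact ⟨u i * a * (u i)⁻¹, by simp [ψ', ← map_mul, ← map_inv, Pi.mul_mulSingle_mul_inv]⟩
  obtain ⟨i, hi⟩ : ∃ i, ψ' i ≠ 1 := by
    by_contra! h
    have hψ1 : ψ = 1 := MonoidHom.pi_ext fun i x => by simpa [ψ'] using DFunLike.congr_fun (h i) x
    obtain ⟨a, b, hab⟩ := hS
    obtain ⟨g, rfl⟩ := hψ a
    obtain ⟨g', rfl⟩ := hψ b
    simp [hψ1] at hab
  have hi_top : (ψ' i).range = ⊤ :=
    (hnormal i).eq_bot_or_eq_top.resolve_left (by rwa [MonoidHom.range_eq_bot_iff])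
  have hj : ∀ j ≠ i, ψ' j = 1 := fun j hji => by
    rw [← MonoidHom.range_eq_bot_iff]
    refine (hnormal j).eq_bot_or_eq_top.resolve_right fun hj_top => ?_
    obtain ⟨a, b, hab⟩ := hS
    obtain ⟨a, rfl⟩ := (MonoidHom.range_eq_top.mp hi_top) a
    obtain ⟨b, rfl⟩ := (MonoidHom.range_eq_top.mp hj_top) b
    exact hab ((Pi.mulSingle_commute (f := fun _ => S) hji.symm a b).map ψ).eq
  have hψ : ψ = (ψ' i).comp (Pi.evalMonoidHom _ i) := MonoidHom.pi_ext fun j x => by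
    rcases eq_or_ne j i with rfl | hji
    · simp [ψ']
    · simpa [ψ', hji] using DFunLike.congr_fun (hj j hji) x
  have hbij : Bijective (ψ' i) :=
    ⟨MonoidHom.injective_of_ne_one hi, MonoidHom.range_eq_top.mp hi_top⟩
  exact ⟨i, MulEquiv.ofBijective _ hbij, fun g => DFunLike.congr_fun hψ g⟩

theorem Subgroup.eq_top_or_exists_fst_eq_of_isSimpleGroup {T : Type*} [Group T]
    {H : Subgroup (S × T)}
    (hfst : ∀ a, ∃ p ∈ H, p.1 = a) (hsnd : ∀ t, ∃ p ∈ H, p.2 = t) :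
    H = ⊤ ∨ ∃ φ : T →* S, Surjective φ ∧ ∀ p ∈ H, p.1 = φ p.2 := by
  have hN : H.goursatFst.Normal :=
    normal_goursatFst fun a => let ⟨p, hp, hpa⟩ := hfst a; ⟨⟨p, hp⟩, hpa⟩
  rcases hN.eq_bot_or_eq_top with hbot | htop
  · right
    have hinj : Injective ((MonoidHom.snd S T).comp H.subtype) := by
      rw [← MonoidHom.ker_eq_bot_iff, eq_bot_iff]
      rintro ⟨p, hp⟩ (hp2 : p.2 = 1)
      have : p.1 ∈ H.goursatFst := mem_goursatFst.mpr (by rwa [← hp2])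
      rw [hbot, mem_bot] at this
      exact Subtype.ext (Prod.ext this hp2)
    have hsurj : Surjective ((MonoidHom.snd S T).comp H.subtype) := fun t =>
      let ⟨p, hp, hpt⟩ := hsnd t; ⟨⟨p, hp⟩, hpt⟩
    set e := MulEquiv.ofBijective _ ⟨hinj, hsurj⟩
    have he : ∀ p (hp : p ∈ H), e.symm p.2 = ⟨p, hp⟩ := fun p hp => e.symm_apply_eq.mpr rfl
    refine ⟨(MonoidHom.fst S T).comp (H.subtype.comp e.symm.toMonoidHom), fun a => ?_,
      fun p hp => by simp [he p hp]⟩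
    obtain ⟨p, hp, rfl⟩ := hfst a
    exact ⟨p.2, by simp [he p hp]⟩
  · left
    refine eq_top_iff.mpr fun x _ => ?_
    obtain ⟨p, hp, hpx⟩ := hsnd x.2
    have hq : (x.1 * p.1⁻¹, (1 : T)) ∈ H := mem_goursatFst.mp (htop ▸ mem_top _)
    convert H.mul_mem hq hp using 1
    ext <;> simp [hpx]

theorem Subgroup.eq_top_of_forall_not_exists_mulEquiv (hS : ∃ a b : S, a * b ≠ b * a) {k : ℕ}
    (H : Subgroup (Fin k → S)) (hsurj : ∀ i a, ∃ g ∈ H, g i = a)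
    (hlink : ∀ i j, i ≠ j → ¬∃ f : S ≃* S, ∀ g ∈ H, f (g i) = g j) : H = ⊤ := by
  induction k with
  | zero => exact Subsingleton.elim _ _
  | succ k ih =>
    set H' := H.comap (Fin.consMonoidHom S k)
    have hmem' : ∀ g : Fin (k + 1) → S, (g 0, Fin.tail g) ∈ H' ↔ g ∈ H := fun g => by
      rw [mem_comap, Fin.consMonoidHom_apply_zero_tail]
    have hmem : ∀ g ∈ H, (g 0, Fin.tail g) ∈ H' := fun g => (hmem' g).mpr
    have htail : H'.map (MonoidHom.snd S (Fin k → S)) = ⊤ := by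
      refine ih _ (fun i a => ?_) fun i j hij ⟨f, hf⟩ => ?_
      · obtain ⟨g, hg, rfl⟩ := hsurj i.succ a
        exact ⟨_, mem_map_of_mem _ (hmem g hg), rfl⟩
      · exact hlink i.succ j.succ (Fin.succ_injective _ |>.ne hij)
          ⟨f, fun g hg => hf _ (mem_map_of_mem _ (hmem g hg))⟩
    rcases eq_top_or_exists_fst_eq_of_isSimpleGroup (H := H')
        (fun a => let ⟨g, hg, hga⟩ := hsurj 0 a; ⟨_, hmem g hg, hga⟩)
        (fun t => mem_map.mp (htail ▸ mem_top t)) with htop | ⟨φ, hφ, hgraph⟩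
    · exact eq_top_iff.mpr fun g _ => (hmem' g).mp (htop ▸ mem_top _)
    · obtain ⟨i, f, hf⟩ := φ.exists_mulEquiv_eq_of_surjective hS hφ
      exact (hlink i.succ 0 (Fin.succ_ne_zero i)
        ⟨f, fun g hg => ((hgraph _ (hmem g hg)).trans (hf _)).symm⟩).elim

theorem Subgroup.eq_top_iff_forall_not_exists_mulEquiv (hS : ∃ a b : S, a * b ≠ b * a) {k : ℕ}
    (H : Subgroup (Fin k → S)) (hsurj : ∀ i a, ∃ g ∈ H, g i = a) :
    H = ⊤ ↔ ∀ i j, i ≠ j → ¬∃ f : S ≃* S, ∀ g ∈ H, f (g i) = g j := by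
  refine ⟨fun htop i j hij ⟨f, hf⟩ => ?_, H.eq_top_of_forall_not_exists_mulEquiv hS hsurj⟩
  obtain ⟨a, ha⟩ := exists_ne (1 : S)
  have := hf (Pi.mulSingle j a) (htop ▸ mem_top _)
  simp [hij.symm, ha.symm] at this

end

theorem hall_diagonal_generation_general (S : Type*) [Group S] [IsSimpleGroup S]
    (hna : ∃ a b : S, a * b ≠ b * a) (n k : ℕ)
    (s : Fin k → Fin n → S) (hs : ∀ i, IsGenSeq (s i)) :
    IsGenSeq (fun j : Fin n => fun i : Fin k => s i j) ↔
      ∀ i j, i ≠ j → ¬∃ f : S ≃* S, ∀ l, f (s i l) = s j l := by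
  set H := Subgroup.closure (Set.range fun j : Fin n => fun i : Fin k => s i j)
  have hlink : ∀ i j (f : S ≃* S), (∀ g ∈ H, f (g i) = g j) ↔ ∀ l, f (s i l) = s j l :=
    fun i j f => by
      change H ≤ ((f : S →* S).comp (Pi.evalMonoidHom _ i)).eqLocus (Pi.evalMonoidHom _ j) ↔ _
      rw [Subgroup.closure_le, Set.range_subset_iff]
      rfl
  have hsurj : ∀ i a, ∃ g ∈ H, g i = a := fun i a => by
    have : a ∈ H.map (Pi.evalMonoidHom _ i) := by
      rw [MonoidHom.map_closure, ← Set.range_comp]; exact (hs i).symm ▸ Subgroup.mem_top a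
    simpa using this
  change H = ⊤ ↔ _
  simp_rw [← hlink]
  exact H.eq_top_iff_forall_not_exists_mulEquiv hna hsurj

/-- Hall's theorem: diagonal tuples built from generating sequences `s₁,…,s_k` of a
finite nonabelian simple group `S` generate `Sᵏ` iff the `sᵢ` are pairwise
inequivalent under `Aut(S)`. -/
theorem hall_diagonal_generation (S : Type*) [Group S] [Finite S] [IsSimpleGroup S]
    (hna : ∃ a b : S, a * b ≠ b * a) (n k : ℕ)
    (s : Fin k → Fin n → S) (hs : ∀ i, IsGenSeq (s i)) :
    IsGenSeq (fun j : Fin n => fun i : Fin k => s i j) ↔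
      ∀ i j, i ≠ j → ¬∃ f : S ≃* S, ∀ l, f (s i l) = s j l :=
  hall_diagonal_generation_general S hna n k s hs
end

section
/- Let S be a finite nonabelian simple group and let n ≥ 2. Then H(n,S) is isomorphic to S^{h_n(S)}, the direct product of h_n(S) copies of S, where h_n(S) is the number of orbits of Aut(S) acting on Γ_n(S). -/
open Function
open scoped commutatorElement

/-- Combined homomorphism into a product. -/
def piHom {F : Type*} [Group F] {ι : Type*} {S : Type*} [Group S]
    (f : ι → F →* S) : F →* (ι → S) where
  toFun x i := f i x
  map_one' := funext fun i => (f i).map_one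
  map_mul' x y := funext fun i => (f i).map_mul x y

@[simp] lemma piHom_apply {F : Type*} [Group F] {ι : Type*} {S : Type*} [Group S]
    (f : ι → F →* S) (x : F) (i : ι) : piHom f x i = f i x := rfl

lemma ker_eq_of_le {F S : Type*} [Group F] [Group S] [Finite S]
    {f g : F →* S} (hf : Surjective f) (hg : Surjective g)
    (h : f.ker ≤ g.ker) : f.ker = g.ker := by
  refine le_antisymm h ?_
  have e := QuotientGroup.quotientKerEquivOfSurjective f hf
  haveI : Finite (FreeGroup Empty) := inferInstance
  haveI : Finite (F ⧸ f.ker) := Finite.of_equiv S e.symm.toEquiv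
  let g' : F ⧸ f.ker →* S := QuotientGroup.lift f.ker g h
  have hg' : Surjective g' := by
    intro s; obtain ⟨x, hx⟩ := hg s; exact ⟨QuotientGroup.mk x, hx⟩
  have hinj : Injective g' :=
    (Finite.injective_iff_surjective_of_equiv e.toEquiv).mpr hg'
  intro x hx
  have h1 : g' (QuotientGroup.mk x) = g' 1 := by
    simpa [g'] using hx
  exact (QuotientGroup.eq_one_iff x).mp (hinj h1)

lemma normal_pi_eq_top {ι : Type*} [Fintype ι] [DecidableEq ι] {S : Type*} [Group S]
    (hcomm : commutator S = ⊤)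
    (N : Subgroup (ι → S)) (hN : N.Normal)
    (hproj : ∀ i, N.map (Pi.evalMonoidHom (fun _ => S) i) = ⊤) : N = ⊤ := by
  have key : ∀ (i : ι) (s : S), Pi.mulSingle i s ∈ N := by
    intro i s
    have hsub : commutatorSet S ⊆ (N.comap (MonoidHom.mulSingle (fun _ => S) i) : Set S) := by
      rintro c ⟨a, t, rfl⟩
      obtain ⟨n, hn, hni⟩ : ∃ n ∈ N, n i = a := by
        have ha : a ∈ N.map (Pi.evalMonoidHom (fun _ => S) i) := by rw [hproj i]; trivial
        obtain ⟨n, hn, hni⟩ := ha; exact ⟨n, hn, hni⟩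
      have hmem : ⁅n, Pi.mulSingle i t⁆ ∈ N := by
        have h2 : Pi.mulSingle i t * n⁻¹ * (Pi.mulSingle i t)⁻¹ ∈ N :=
          hN.conj_mem _ (N.inv_mem hn) _
        have h3 := N.mul_mem hn h2
        simpa [commutatorElement_def, mul_assoc] using h3
      have heq : ⁅n, Pi.mulSingle i t⁆ = (Pi.mulSingle i ⁅a, t⁆ : ι → S) := by
        funext j
        by_cases hj : j = i
        · subst hj
          simp [commutatorElement_def, hni]
        · have ht : (Pi.mulSingle i t : ι → S) j = 1 := Pi.mulSingle_eq_of_ne (M := fun _ => S) hj t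
          have hc : (Pi.mulSingle i ⁅a, t⁆ : ι → S) j = 1 := Pi.mulSingle_eq_of_ne (M := fun _ => S) hj _
          simp only [commutatorElement_def] at hc ⊢
          simp [Pi.mul_apply, Pi.inv_apply, ht, hc]
      show (Pi.mulSingle i ⁅a, t⁆ : ι → S) ∈ N
      rw [← heq]; exact hmem
    have hle : (⊤ : Subgroup S) ≤ N.comap (MonoidHom.mulSingle (fun _ => S) i) := by
      rw [← hcomm, commutator_eq_closure]
      exact (Subgroup.closure_le _).mpr hsub
    exact hle trivial
  rw [eq_top_iff]
  intro x _
  have hx := Finset.noncommProd_mulSingle x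
  rw [← hx]
  exact Subgroup.noncommProd_mem N _ fun i _ => key i (x i)

lemma pi_surj_fin {F S : Type*} [Group F] [Group S] [Finite S] [IsSimpleGroup S]
    (hcomm : commutator S = ⊤) :
    ∀ (m : ℕ) (f : Fin m → F →* S), (∀ i, Surjective (f i)) →
      (∀ i j, (f i).ker = (f j).ker → i = j) → Surjective (piHom f) := by
  intro m
  induction m with
  | zero => exact fun f _ _ v => ⟨1, funext fun i => i.elim0⟩
  | succ m ih =>
    intro f hsurj hker
    set g : Fin m → F →* S := fun i => f i.succ with hgdef
    have hg : Surjective (piHom g) :=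
      ih g (fun i => hsurj i.succ)
        (fun i j h => Fin.succ_injective _ (hker _ _ h))
    set K := (f 0).ker with hK
    set M := K.map (piHom g) with hM
    have hMn : M.Normal := (MonoidHom.normal_ker (f 0)).map (piHom g) hg
    have hMproj : ∀ i, M.map (Pi.evalMonoidHom (fun _ => S) i) = ⊤ := by
      intro i
      have h1 : M.map (Pi.evalMonoidHom (fun _ => S) i) = K.map (f i.succ) := by
        rw [hM, Subgroup.map_map]
        rfl
      rw [h1]
      have hn : (K.map (f i.succ)).Normal :=
        (MonoidHom.normal_ker (f 0)).map _ (hsurj i.succ)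
      rcases IsSimpleGroup.eq_bot_or_eq_top_of_normal _ hn with hb | ht
      · exfalso
        have hle : (f 0).ker ≤ (f i.succ).ker := (Subgroup.map_eq_bot_iff _).mp hb
        have h2 := hker 0 i.succ (ker_eq_of_le (hsurj 0) (hsurj i.succ) hle)
        exact (Fin.succ_ne_zero i) h2.symm
      · exact ht
    have hMtop : M = ⊤ := normal_pi_eq_top hcomm M hMn hMproj
    intro v
    obtain ⟨y, hy⟩ := hsurj 0 (v 0)
    have hmem : (fun i => v i.succ) * (piHom g y)⁻¹ ∈ M := by rw [hMtop]; trivial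
    obtain ⟨k, hk, hk2⟩ := hmem
    refine ⟨k * y, funext fun i => ?_⟩
    refine Fin.cases ?_ (fun i => ?_) i
    · have hk0 : f 0 k = 1 := hk
      show f 0 (k * y) = v 0
      rw [map_mul, hk0, one_mul, hy]
    · show f i.succ (k * y) = v i.succ
      have h3 := congrFun hk2 i
      simp only [piHom_apply, Pi.mul_apply, Pi.inv_apply] at h3
      rw [map_mul]
      rw [show f i.succ k = v i.succ * (f i.succ y)⁻¹ from h3]
      exact inv_mul_cancel_right _ _

lemma pi_surj {ι F S : Type*} [Finite ι] [Group F] [Group S] [Finite S] [IsSimpleGroup S]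
    (hcomm : commutator S = ⊤) (f : ι → F →* S) (hsurj : ∀ i, Surjective (f i))
    (hker : ∀ i j, (f i).ker = (f j).ker → i = j) : Surjective (piHom f) := by
  obtain ⟨m, ⟨e⟩⟩ := Finite.exists_equiv_fin ι
  intro v
  obtain ⟨x, hx⟩ := pi_surj_fin hcomm m (fun k => f (e.symm k))
    (fun k => hsurj _)
    (fun k l h => e.symm.injective (hker _ _ h))
    (fun k => v (e.symm k))
  refine ⟨x, funext fun i => ?_⟩
  have h1 := congrFun hx (e i)
  simpa using h1



/-- The setoid on `Γ_n(G)` whose classes are the orbits of the componentwise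
action of `Aut(G)`. -/
def genSeqSetoid (n : ℕ) (G : Type*) [Group G] :
    Setoid {x : Fin n → G // IsGenSeq x} where
  r s t := ∃ f : G ≃* G, ∀ i, f (s.1 i) = t.1 i
  iseqv := by
    constructor
    · intro s; exact ⟨MulEquiv.refl G, fun i => rfl⟩
    · rintro s t ⟨f, hf⟩
      exact ⟨f.symm, fun i => by rw [← hf i, f.symm_apply_apply]⟩
    · rintro s t u ⟨f, hf⟩ ⟨g, hg⟩
      exact ⟨f.trans g, fun i => by simp [MulEquiv.trans_apply, hf i, hg i]⟩

/-- `h_n(G)`: the number of orbits of `Aut(G)` acting on `Γ_n(G)`. -/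
noncomputable def hcount (n : ℕ) (G : Type*) [Group G] : ℕ :=
  Nat.card (Quotient (genSeqSetoid n G))

/-- For a finite nonabelian simple group `S` and `n ≥ 2`,
`H(n,S) ≅ S^{h_n(S)}`. -/
theorem cover_of_simple (S : Type*) [Group S] [Finite S] [IsSimpleGroup S]
    (hna : ∃ a b : S, a * b ≠ b * a) (n : ℕ) (hn : 2 ≤ n) :
    Nonempty (HomogeneousCover n S ≃* (Fin (hcount n S) → S)) := by
  classical
  have hcomm : commutator S = ⊤ := by
    rcases IsSimpleGroup.eq_bot_or_eq_top_of_normal (commutator S) inferInstance with h | h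
    · exfalso
      obtain ⟨a, b, hab⟩ := hna
      apply hab
      have hmem : ⁅a, b⁆ ∈ commutator S := by
        rw [commutator_eq_closure]
        exact Subgroup.subset_closure ⟨a, b, rfl⟩
      rw [h, Subgroup.mem_bot] at hmem
      exact commutatorElement_eq_one_iff_mul_comm.mp hmem
    · exact h
  set Q := Quotient (genSeqSetoid n S) with hQ
  haveI : Finite Q := Quotient.finite _
  set fs : Q → (FreeGroup (Fin n) →* S) := fun q => FreeGroup.lift q.out.1 with hfs
  have hfs_surj : ∀ q, Function.Surjective (fs q) := by
    intro q
    rw [← MonoidHom.range_eq_top, FreeGroup.range_lift_eq_closure]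
    exact q.out.2
  have hofs : ∀ (q : Q) (i : Fin n), fs q (FreeGroup.of i) = q.out.1 i :=
    fun q i => FreeGroup.lift_apply_of
  have hker : ∀ q q', (fs q).ker = (fs q').ker → q = q' := by
    intro q q' h
    let e1 := QuotientGroup.quotientKerEquivOfSurjective (fs q) (hfs_surj q)
    let e2 := QuotientGroup.quotientKerEquivOfSurjective (fs q') (hfs_surj q')
    let φ : S ≃* S := e1.symm.trans ((QuotientGroup.quotientMulEquivOfEq h).trans e2)
    have hφ : ∀ x, φ (fs q x) = fs q' x := by
      intro x
      have h1 : e1 (QuotientGroup.mk x) = fs q x := rfl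
      have h2 : e1.symm (fs q x) = QuotientGroup.mk x := by
        rw [← h1, MulEquiv.symm_apply_apply]
      show e2 (QuotientGroup.quotientMulEquivOfEq h (e1.symm (fs q x))) = fs q' x
      rw [h2, QuotientGroup.quotientMulEquivOfEq_mk]
      rfl
    have hrel : (genSeqSetoid n S).r q.out q'.out := by
      refine ⟨φ, fun i => ?_⟩
      rw [← hofs q i, hφ, hofs]
    calc q = Quotient.mk _ q.out := (Quotient.out_eq q).symm
      _ = Quotient.mk _ q'.out := Quotient.sound hrel
      _ = q' := Quotient.out_eq q'
  have hΦ : Function.Surjective (piHom fs) := pi_surj hcomm fs hfs_surj hker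
  have hkerΦ : (piHom fs).ker = coverKer n S := by
    apply le_antisymm
    · intro x hx
      have hx1 : ∀ q, fs q x = 1 := by
        intro q
        have := congrFun (MonoidHom.mem_ker.mp hx) q
        simpa using this
      simp only [coverKer, Subgroup.mem_iInf]
      intro f hf
      have hlift : FreeGroup.lift (fun i => f (FreeGroup.of i)) = f :=
        FreeGroup.ext_hom _ _ fun i => FreeGroup.lift_apply_of
      have hgen : IsGenSeq (fun i => f (FreeGroup.of i)) := by
        unfold IsGenSeq
        rw [← FreeGroup.range_lift_eq_closure, hlift, MonoidHom.range_eq_top]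
        exact hf
      set q : Q := Quotient.mk (genSeqSetoid n S) ⟨fun i => f (FreeGroup.of i), hgen⟩ with hq
      obtain ⟨φ, hφ⟩ : (genSeqSetoid n S).r q.out ⟨fun i => f (FreeGroup.of i), hgen⟩ :=
        Quotient.exact q.out_eq
      have hcomp : f = φ.toMonoidHom.comp (fs q) := by
        refine FreeGroup.ext_hom _ _ fun i => ?_
        simp only [MonoidHom.comp_apply, hofs]
        exact (hφ i).symm
      rw [MonoidHom.mem_ker, hcomp, MonoidHom.comp_apply, hx1 q, map_one]
    · intro x hx
      simp only [coverKer, Subgroup.mem_iInf] at hx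
      rw [MonoidHom.mem_ker]
      funext q
      simpa using hx (fs q) (hfs_surj q)
  haveI := Fintype.ofFinite Q
  have hcard : hcount n S = Fintype.card Q := Nat.card_eq_fintype_card
  let e3 : Q ≃ Fin (hcount n S) := (Fintype.equivFin Q).trans (finCongr hcard.symm)
  exact ⟨(QuotientGroup.quotientMulEquivOfEq hkerΦ.symm).trans
    ((QuotientGroup.quotientKerEquivOfSurjective (piHom fs) hΦ).trans
      (MulEquiv.arrowCongr e3 (MulEquiv.refl S)))⟩
end
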